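/- Let (X,⊥) be a homogeneously transitive orthoset containing four mutually orthogonal elements. Then the ortholattice of orthoclosed subsets of X has the finite covering property; explicitly: for every finite subset P ⊆ X, every e ∈ X with e ∉ P^⊥⊥, and every orthoclosed subset B of X with P^⊥⊥ ⊊ B ⊆ (P ∪ {e})^⊥⊥, one has B = (P ∪ {e})^⊥⊥. -/

import Mathlib

/-- An automorphism of the orthoset `(X, perp)`. -/
def IsOrthoAuto {X : Type*} (perp : X → X → Prop) (φ : Equiv.Perm X) : Prop :=
  ∀ p q : X, perp p q ↔ perp (φ p) (φ q)

/-- The group `G_{ef}`. -/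
def Gef {X : Type*} (perp : X → X → Prop) (e f : X) : Set (Equiv.Perm X) :=
  {φ | IsOrthoAuto perp φ ∧ ∀ x : X, perp x e → perp x f → φ x = x}

/-- Homogeneous transitivity: (HT1) and (HT2). -/
def HomTrans {X : Type*} (perp : X → X → Prop) : Prop :=
  ∀ e f : X, e ≠ f →
    (∃ φ ∈ Gef perp e f, φ e = f) ∧
    (∀ e' f' : X, e' ≠ f' → ∃ τ : Equiv.Perm X, IsOrthoAuto perp τ ∧ τ e = e' ∧
      Gef perp e f = (fun φ => τ⁻¹ * φ * τ) '' Gef perp e' f')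

/-- The orthocomplement of a subset of an orthoset. -/
def pperp {X : Type*} (perp : X → X → Prop) (A : Set X) : Set X :=
  {q | ∀ p ∈ A, perp q p}

section Aux

variable {X : Type*} (perp : X → X → Prop)

lemma mem_pperp_iff {A : Set X} {q : X} : q ∈ pperp perp A ↔ ∀ p ∈ A, perp q p := Iff.rfl

lemma pperp_anti {A B : Set X} (h : A ⊆ B) : pperp perp B ⊆ pperp perp A :=
  fun q hq p hp => hq p (h hp)

lemma ppc_mono {A B : Set X} (h : A ⊆ B) :
    pperp perp (pperp perp A) ⊆ pperp perp (pperp perp B) :=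
  pperp_anti perp (pperp_anti perp h)

variable (hsymm : ∀ x y : X, perp x y → perp y x)

include hsymm

lemma subset_ppc (A : Set X) : A ⊆ pperp perp (pperp perp A) :=
  fun a ha q hq => hsymm _ _ (hq a ha)

lemma pperp_ppc (A : Set X) :
    pperp perp (pperp perp (pperp perp A)) = pperp perp A :=
  subset_antisymm (pperp_anti perp (subset_ppc perp hsymm A))
    (subset_ppc perp hsymm (pperp perp A))

lemma ppc_idem (A : Set X) :
    pperp perp (pperp perp (pperp perp (pperp perp A))) = pperp perp (pperp perp A) := by
  rw [pperp_ppc perp hsymm (pperp perp A)]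

lemma pperp_union_ppc (A B : Set X) :
    pperp perp (A ∪ pperp perp (pperp perp B)) = pperp perp (A ∪ B) := by
  apply subset_antisymm
  · exact pperp_anti perp (Set.union_subset_union_right A (subset_ppc perp hsymm B))
  · intro q hq p hp
    rcases hp with hp | hp
    · exact hq p (Or.inl hp)
    · exact hsymm _ _ (hp q (fun r hr => hq r (Or.inr hr)))

lemma ppc_congr_union {A B C : Set X}
    (h : pperp perp (pperp perp B) = pperp perp (pperp perp C)) :
    pperp perp (pperp perp (A ∪ B)) = pperp perp (pperp perp (A ∪ C)) := by
  have : pperp perp (A ∪ B) = pperp perp (A ∪ C) := by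
    rw [← pperp_union_ppc perp hsymm A B, h, pperp_union_ppc perp hsymm A C]
  rw [this]

lemma ppc_insert_of_mem {A : Set X} {p : X} (h : p ∈ pperp perp (pperp perp A)) :
    pperp perp (pperp perp (insert p A)) = pperp perp (pperp perp A) := by
  have : pperp perp (insert p A) = pperp perp A := by
    apply subset_antisymm
    · exact pperp_anti perp (Set.subset_insert p A)
    · intro q hq r hr
      rcases hr with rfl | hr
      · exact hsymm _ _ (h q hq)
      · exact hq r hr
  rw [this]

lemma auto_inv {φ : Equiv.Perm X} (h : IsOrthoAuto perp φ) : IsOrthoAuto perp φ⁻¹ := by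
  intro p q
  have := h (φ⁻¹ p) (φ⁻¹ q)
  simp only [Equiv.Perm.inv_def, Equiv.apply_symm_apply] at this
  exact this.symm

lemma image_pperp {φ : Equiv.Perm X} (h : IsOrthoAuto perp φ) (A : Set X) :
    (⇑φ) '' (pperp perp A) = pperp perp ((⇑φ) '' A) := by
  ext y
  rw [Set.mem_image_equiv]
  constructor
  · rintro hy p ⟨a, ha, rfl⟩
    have : perp (φ.symm y) a := hy a ha
    have := (h (φ.symm y) a).mp this
    simpa using this
  · intro hy a ha
    have : perp y (φ a) := hy (φ a) ⟨a, ha, rfl⟩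
    have := (h (φ.symm y) a).mpr (by simpa using this)
    exact this

lemma one_mem_Gef (e f : X) : (1 : Equiv.Perm X) ∈ Gef perp e f :=
  ⟨fun p q => by simp, fun x _ _ => rfl⟩


lemma orbit_eq (hht : HomTrans perp) {e f : X} (hef : e ≠ f) :
    pperp perp (pperp perp ({e, f} : Set X)) = {g | ∃ φ ∈ Gef perp e f, φ e = g} := by
  ext g
  constructor
  · intro hg
    by_cases hge : g = e
    · exact ⟨1, one_mem_Gef perp hsymm e f, by simp [hge]⟩
    · obtain ⟨φ, hφ, hφe⟩ := (hht e g (fun h => hge h.symm)).1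
      refine ⟨φ, ⟨hφ.1, ?_⟩, hφe⟩
      intro x hxe hxf
      apply hφ.2 x hxe
      have hx : x ∈ pperp perp ({e, f} : Set X) := by
        intro p hp
        simp only [Set.mem_insert_iff, Set.mem_singleton_iff] at hp
        rcases hp with rfl | rfl
        exacts [hxe, hxf]
      exact hsymm _ _ (hg x hx)
  · rintro ⟨φ, hφ, rfl⟩
    intro q hq
    have hqe : perp q e := hq e (by simp)
    have hqf : perp q f := hq f (by simp)
    have hfix : φ q = q := hφ.2 q hqe hqf
    have h2 := (hφ.1 q e).mp hqe
    rw [hfix] at h2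
    exact hsymm _ _ h2

variable (hirr : ∀ x : X, ¬ perp x x)
variable (hht : HomTrans perp)
variable (hrank : ∃ a b c d : X,
      perp a b ∧ perp a c ∧ perp a d ∧ perp b c ∧ perp b d ∧ perp c d)

include hirr hht hrank

lemma exists_ob {e f : X} (hef : e ≠ f) :
    ∃ d, perp d e ∧ pperp perp (pperp perp ({e, f} : Set X))
      = pperp perp (pperp perp ({e, d} : Set X)) := by
  obtain ⟨a, b, c0, d0, hab, -, -, -, -, -⟩ := hrank
  have hab' : a ≠ b := fun h => hirr b (h ▸ hab)
  obtain ⟨τ, hτ, hτe, hG⟩ := (hht e f hef).2 a b hab'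
  have hτi : IsOrthoAuto perp τ⁻¹ := auto_inv perp hsymm hτ
  have hτa : (τ⁻¹ : Equiv.Perm X) a = e := by rw [← hτe]; simp
  refine ⟨τ⁻¹ b, ?_, ?_⟩
  · have h3 : perp (τ⁻¹ b) (τ⁻¹ a) := (hτi b a).mp (hsymm _ _ hab)
    rwa [hτa] at h3
  · have hstep : {g | ∃ φ ∈ Gef perp e f, φ e = g}
        = (⇑(τ⁻¹ : Equiv.Perm X)) '' {g | ∃ ψ ∈ Gef perp a b, ψ a = g} := by
      ext g
      constructor
      · rintro ⟨φ, hφ, rfl⟩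
        rw [hG] at hφ
        obtain ⟨ψ, hψ, rfl⟩ := hφ
        exact ⟨ψ a, ⟨ψ, hψ, rfl⟩, by simp [Equiv.Perm.mul_apply, hτe]⟩
      · rintro ⟨g', ⟨ψ, hψ, rfl⟩, rfl⟩
        refine ⟨τ⁻¹ * ψ * τ, ?_, by simp [Equiv.Perm.mul_apply, hτe]⟩
        rw [hG]
        exact ⟨ψ, hψ, rfl⟩
    calc pperp perp (pperp perp ({e, f} : Set X))
        = {g | ∃ φ ∈ Gef perp e f, φ e = g} := orbit_eq perp hsymm hht hef
      _ = (⇑(τ⁻¹ : Equiv.Perm X)) '' {g | ∃ ψ ∈ Gef perp a b, ψ a = g} := hstep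
      _ = (⇑(τ⁻¹ : Equiv.Perm X)) '' (pperp perp (pperp perp ({a, b} : Set X))) := by
          rw [orbit_eq perp hsymm hht hab']
      _ = pperp perp ((⇑(τ⁻¹ : Equiv.Perm X)) '' (pperp perp ({a, b} : Set X))) :=
          image_pperp perp hsymm hτi _
      _ = pperp perp (pperp perp ((⇑(τ⁻¹ : Equiv.Perm X)) '' ({a, b} : Set X))) := by
          rw [image_pperp perp hsymm hτi]
      _ = pperp perp (pperp perp ({(τ⁻¹ : Equiv.Perm X) a, (τ⁻¹ : Equiv.Perm X) b} : Set X)) := by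
          rw [Set.image_pair]
      _ = pperp perp (pperp perp ({e, (τ⁻¹ : Equiv.Perm X) b} : Set X)) := by rw [hτa]

lemma ppc_singleton {x y : X} (h : y ∈ pperp perp (pperp perp ({x} : Set X))) : y = x := by
  by_contra hne
  have hxy : x ≠ y := fun h' => hne h'.symm
  have hpair : pperp perp ({x, y} : Set X) = pperp perp ({x} : Set X) := by
    apply subset_antisymm
    · exact pperp_anti perp (by simp)
    · intro q hq p hp
      simp only [Set.mem_insert_iff, Set.mem_singleton_iff] at hp
      rcases hp with rfl | rfl
      · exact hq _ rfl
      · exact hsymm _ _ (h q hq)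
  obtain ⟨d, hdx, heq⟩ := exists_ob perp hsymm hirr hht hrank hxy
  have hd : d ∈ pperp perp (pperp perp ({x, d} : Set X)) :=
    subset_ppc perp hsymm _ (by simp)
  rw [← heq, hpair] at hd
  exact hirr d (hd d (fun p hp => by
    rw [Set.mem_singleton_iff] at hp; subst hp; exact hdx))

lemma peel {T : Set X} {w u : X} (hT : ∀ t ∈ T, perp t w) (hu : perp u w)
    (huT : u ∈ pperp perp (pperp perp (insert w T))) :
    u ∈ pperp perp (pperp perp T) := by
  intro y hy
  by_cases hyw : perp y w
  · refine huT y ?_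
    intro p hp
    rcases hp with rfl | hp
    exacts [hyw, hy p hp]
  · by_cases hyeq : y = w
    · subst hyeq; exact hu
    · obtain ⟨d, hdw, heq⟩ := exists_ob perp hsymm hirr hht hrank
        (show w ≠ y from fun h => hyeq h.symm)
      have hTd : ∀ t ∈ T, perp d t := by
        intro t ht
        have htm : t ∈ pperp perp ({w, y} : Set X) := by
          intro p hp
          simp only [Set.mem_insert_iff, Set.mem_singleton_iff] at hp
          rcases hp with rfl | rfl
          exacts [hT t ht, hsymm _ _ (hy t ht)]
        have hdm : d ∈ pperp perp (pperp perp ({w, d} : Set X)) :=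
          subset_ppc perp hsymm _ (by simp)
        rw [← heq] at hdm
        exact hdm t htm
      have hdins : d ∈ pperp perp (insert w T) := by
        intro p hp
        rcases hp with rfl | hp
        exacts [hdw, hTd p hp]
      have hud : perp u d := huT d hdins
      have hym : y ∈ pperp perp (pperp perp ({w, d} : Set X)) := by
        rw [← heq]; exact subset_ppc perp hsymm _ (by simp)
      have hum : u ∈ pperp perp ({w, d} : Set X) := by
        intro p hp
        simp only [Set.mem_insert_iff, Set.mem_singleton_iff] at hp
        rcases hp with rfl | rfl
        exacts [hu, hud]
      exact hsymm _ _ (hym u hum)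


lemma gs : ∀ (l : List X), l.Pairwise perp → ∀ p : X,
    p ∉ pperp perp (pperp perp {x | x ∈ l}) →
    ∃ v : X, (∀ w ∈ l, perp v w) ∧
      pperp perp (pperp perp (insert p {x | x ∈ l}))
        = pperp perp (pperp perp (insert v {x | x ∈ l})) ∧
      v ∈ pperp perp (pperp perp (insert p {x | x ∈ l})) := by
  intro l
  induction l with
  | nil =>
    intro _ p _
    exact ⟨p, by simp, rfl, subset_ppc perp hsymm _ (Set.mem_insert _ _)⟩
  | cons w l₁ ih =>
    intro hP p hp
    obtain ⟨hw, hP₁⟩ := List.pairwise_cons.mp hP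
    have hS : {x : X | x ∈ (w :: l₁)} = insert w {x : X | x ∈ l₁} := by ext; simp
    rw [hS] at hp ⊢
    have hpw : w ≠ p := by
      rintro rfl
      exact hp (subset_ppc perp hsymm _ (Set.mem_insert _ _))
    obtain ⟨d, hdw, heq⟩ := exists_ob perp hsymm hirr hht hrank hpw
    have e1 : insert p (insert w {x : X | x ∈ l₁}) = {x : X | x ∈ l₁} ∪ ({w, p} : Set X) := by
      ext; simp; tauto
    have e2 : insert w (insert d {x : X | x ∈ l₁}) = {x : X | x ∈ l₁} ∪ ({w, d} : Set X) := by
      ext; simp; try tauto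
    have key : pperp perp (pperp perp (insert p (insert w {x : X | x ∈ l₁})))
        = pperp perp (pperp perp (insert w (insert d {x : X | x ∈ l₁}))) := by
      rw [e1, e2]
      exact ppc_congr_union perp hsymm heq
    have hd : d ∉ pperp perp (pperp perp {x : X | x ∈ l₁}) := by
      intro hd
      have hd2 : d ∈ pperp perp (pperp perp (insert w {x : X | x ∈ l₁})) :=
        ppc_mono perp (Set.subset_insert _ _) hd
      have habs : pperp perp (pperp perp (insert d (insert w {x : X | x ∈ l₁})))
          = pperp perp (pperp perp (insert w {x : X | x ∈ l₁})) :=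
        ppc_insert_of_mem perp hsymm hd2
      have hmem : p ∈ pperp perp (pperp perp (insert p (insert w {x : X | x ∈ l₁}))) :=
        subset_ppc perp hsymm _ (Set.mem_insert _ _)
      rw [key, Set.insert_comm, habs] at hmem
      exact hp hmem
    obtain ⟨v, hv, EQ2, hvmem⟩ := ih hP₁ d hd
    have hwins : w ∈ pperp perp (insert d {x : X | x ∈ l₁}) := by
      intro q hq
      rcases hq with rfl | hq
      exacts [hsymm _ _ hdw, hw q hq]
    have hvw : perp v w := hvmem w hwins
    have key2 : pperp perp (pperp perp (insert w (insert d {x : X | x ∈ l₁})))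
        = pperp perp (pperp perp (insert w (insert v {x : X | x ∈ l₁}))) := by
      rw [← Set.singleton_union, ← Set.singleton_union]
      exact ppc_congr_union perp hsymm EQ2
    refine ⟨v, ?_, ?_, ?_⟩
    · intro x hx
      rcases List.mem_cons.mp hx with rfl | hx
      exacts [hvw, hv x hx]
    · rw [key, key2, Set.insert_comm]
    · have h5 : v ∈ pperp perp (pperp perp (insert d {x : X | x ∈ l₁})) := hvmem
      have h6 : v ∈ pperp perp (pperp perp (insert w (insert d {x : X | x ∈ l₁}))) :=
        ppc_mono perp (Set.subset_insert _ _) h5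
      rwa [← key] at h6

lemma obk {P : Set X} (hP : P.Finite) : ∃ l : List X, l.Pairwise perp ∧
    pperp perp (pperp perp P) = pperp perp (pperp perp {x | x ∈ l}) := by
  refine Set.Finite.induction_on
    (motive := fun s _ => ∃ l : List X, l.Pairwise perp ∧
      pperp perp (pperp perp s) = pperp perp (pperp perp {x | x ∈ l})) P hP ?_ ?_
  · refine ⟨[], List.Pairwise.nil, ?_⟩
    have h0 : {x : X | x ∈ ([] : List X)} = (∅ : Set X) := by ext; simp
    rw [h0]
  · rintro a s ha hs ⟨l, hl, hQ⟩
    by_cases hmem : a ∈ pperp perp (pperp perp s)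
    · exact ⟨l, hl, by rw [ppc_insert_of_mem perp hsymm hmem, hQ]⟩
    · have ha' : a ∉ pperp perp (pperp perp {x : X | x ∈ l}) := by rwa [← hQ]
      obtain ⟨v, hv, EQ, -⟩ := gs perp hsymm hirr hht hrank l hl a ha'
      refine ⟨v :: l, List.pairwise_cons.mpr ⟨hv, hl⟩, ?_⟩
      have hc : pperp perp (pperp perp (insert a s))
          = pperp perp (pperp perp (insert a {x : X | x ∈ l})) := by
        rw [← Set.singleton_union, ← Set.singleton_union]
        exact ppc_congr_union perp hsymm hQ
      have hS : {x : X | x ∈ (v :: l)} = insert v {x : X | x ∈ l} := by ext; simp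
      rw [hc, EQ, hS]

lemma iter : ∀ (l : List X), l.Pairwise perp → ∀ u v : X,
    (∀ w ∈ l, perp u w) → (∀ w ∈ l, perp v w) →
    u ∈ pperp perp (pperp perp (insert v {x | x ∈ l})) →
    u ∈ pperp perp (pperp perp ({v} : Set X)) := by
  intro l
  induction l with
  | nil =>
    intro _ u v _ _ hm
    have h0 : insert v {x : X | x ∈ ([] : List X)} = ({v} : Set X) := by ext; simp
    rwa [h0] at hm
  | cons w l₁ ih =>
    intro hP u v hu hv hm
    obtain ⟨hw, hP₁⟩ := List.pairwise_cons.mp hP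
    have hS : {x : X | x ∈ (w :: l₁)} = insert w {x : X | x ∈ l₁} := by ext; simp
    rw [hS, Set.insert_comm] at hm
    have hT : ∀ t ∈ insert v {x : X | x ∈ l₁}, perp t w := by
      intro t ht
      rcases ht with rfl | ht
      exacts [hv w List.mem_cons_self, hsymm _ _ (hw t ht)]
    have hm2 : u ∈ pperp perp (pperp perp (insert v {x : X | x ∈ l₁})) :=
      peel perp hsymm hirr hht hrank hT (hu w List.mem_cons_self) hm
    exact ih hP₁ u v (fun x hx => hu x (List.mem_cons_of_mem _ hx))
      (fun x hx => hv x (List.mem_cons_of_mem _ hx)) hm2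

end Aux

theorem stmt_14 {X : Type*} [Nonempty X] (perp : X → X → Prop)
    (hsymm : ∀ x y : X, perp x y → perp y x)
    (hirr : ∀ x : X, ¬ perp x x)
    (hht : HomTrans perp)
    (hrank : ∃ a b c d : X,
      perp a b ∧ perp a c ∧ perp a d ∧ perp b c ∧ perp b d ∧ perp c d)
    (P : Set X) (hP : P.Finite) (e : X)
    (he : e ∉ pperp perp (pperp perp P))
    (B : Set X) (hB : pperp perp (pperp perp B) = B)
    (h1 : pperp perp (pperp perp P) ⊂ B)
    (h2 : B ⊆ pperp perp (pperp perp (insert e P))) :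
    B = pperp perp (pperp perp (insert e P)) := by
  obtain ⟨f, hfB, hfP⟩ := Set.exists_of_ssubset h1
  obtain ⟨l, hl, hQ⟩ := obk perp hsymm hirr hht hrank hP
  have heL : e ∉ pperp perp (pperp perp {x | x ∈ l}) := by rwa [← hQ]
  have hfL : f ∉ pperp perp (pperp perp {x | x ∈ l}) := by rwa [hQ] at hfP
  obtain ⟨v, hv, EQe, hvmem⟩ := gs perp hsymm hirr hht hrank l hl e heL
  obtain ⟨u, hu, EQf, humem⟩ := gs perp hsymm hirr hht hrank l hl f hfL
  have hc : pperp perp (pperp perp (insert e P))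
      = pperp perp (pperp perp (insert e {x | x ∈ l})) := by
    rw [← Set.singleton_union, ← Set.singleton_union]
    exact ppc_congr_union perp hsymm hQ
  have hiB : insert f {x | x ∈ l} ⊆ B := by
    intro t ht
    rcases ht with rfl | ht
    · exact hfB
    · have h3 : t ∈ pperp perp (pperp perp {x | x ∈ l}) :=
        subset_ppc perp hsymm _ ht
      rw [← hQ] at h3
      exact h1.subset h3
  have hfsub : pperp perp (pperp perp (insert f {x | x ∈ l})) ⊆ B := by
    intro t ht
    have h3 := ppc_mono perp hiB ht
    rwa [hB] at h3
  have hum2 : u ∈ pperp perp (pperp perp (insert v {x | x ∈ l})) := by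
    have hsub : insert f {x | x ∈ l}
        ⊆ pperp perp (pperp perp (insert v {x | x ∈ l})) := by
      intro t ht
      rcases ht with rfl | ht
      · have h4 := h2 hfB
        rwa [hc, EQe] at h4
      · exact subset_ppc perp hsymm _ (Set.mem_insert_of_mem _ ht)
    have h5 := ppc_mono perp hsub humem
    rwa [ppc_idem perp hsymm] at h5
  have huv : u = v :=
    ppc_singleton perp hsymm hirr hht hrank
      (iter perp hsymm hirr hht hrank l hl u v hu hv hum2)
  apply subset_antisymm h2
  rw [hc, EQe, ← huv, ← EQf]
  exact hfsub
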